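/- Let G = (Φ, Σ, R, 𝒮) be a regular tree grammar and G' its subset-construction determinization (nonterminals of G' are subsets A' ⊆ Φ; a rule A' → x(B'₁,…,B'_k) is included in R' iff A' equals the set of all A ∈ Φ such that A → x(B₁,…,B_k) ∈ R for some B_j ∈ B'_j). Then for every nonterminal A ∈ Φ, every n ∈ ℕ, and every tree x: x ∈ L_n(G|A) if and only if there exists a nonterminal A' of G' with A ∈ A' and x ∈ L_n(G'|A'). -/

import Mathlib

structure Rule (N : Type) (α : Type) where
  lhs : N
  sym : α
  rhs : List N
deriving DecidableEq

inductive RTree (α : Type) where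
  | node : α → List (RTree α) → RTree α

def RTree.size {α : Type} : RTree α → Nat
  | .node _ ys => 1 + (ys.attach.map (fun y => RTree.size y.1)).sum
decreasing_by have := List.sizeOf_lt_of_mem y.2; simp only [RTree.node.sizeOf_spec]; omega

def RTree.children {α : Type} : RTree α → List (RTree α)
  | .node _ ys => ys

def RTree.root {α : Type} : RTree α → α
  | .node x _ => x

def RTree.dfs {α : Type} : RTree α → List (RTree α)
  | .node x ys => (ys.attach.map (fun y => RTree.dfs y.1)).flatten ++ [.node x ys]
decreasing_by have := List.sizeOf_lt_of_mem y.2; simp only [RTree.node.sizeOf_spec]; omega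

inductive GenList {N α : Type} (R : Set (Rule N α)) :
    List (Rule N α) → List N → List (RTree α) → Prop where
  | nil : GenList R [] [] []
  | step {r : Rule N α} {rs : List (Rule N α)} {stack : List N}
      {ys ts : List (RTree α)} :
      r ∈ R →
      ys.length = r.rhs.length →
      GenList R rs (r.rhs ++ stack) (ys ++ ts) →
      GenList R (r :: rs) (r.lhs :: stack) (RTree.node r.sym ys :: ts)

def GenSeq {N α : Type} (R : Set (Rule N α)) (rs : List (Rule N α))
    (A : N) (t : RTree α) : Prop :=
  GenList R rs [A] [t]

def Lang {N α : Type} (R : Set (Rule N α)) (A : N) : Set (RTree α) :=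
  {t | ∃ rs, GenSeq R rs A t}

def LangN {N α : Type} (R : Set (Rule N α)) (A : N) (n : Nat) : Set (RTree α) :=
  {t ∈ Lang R A | t.size ≤ n}

def Deterministic {N α : Type} (R : Set (Rule N α)) : Prop :=
  ∀ r ∈ R, ∀ r' ∈ R, r.sym = r'.sym → r.rhs = r'.rhs → r = r'

def parse {N α : Type} [DecidableEq N] [DecidableEq α] (R : List (Rule N α)) :
    RTree α → Option (N × List (Rule N α))
  | RTree.node x ys => do
    let res ← ys.attach.mapM (fun y => parse R y.1)
    match R.find? (fun r => r.sym == x && r.rhs == res.map Prod.fst) with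
    | some r => some (r.lhs, r :: (res.map Prod.snd).flatten)
    | none => none
decreasing_by have := List.sizeOf_lt_of_mem y.2; simp only [RTree.node.sizeOf_spec]; omega

/-!
A tree `node x ys` is generated from `A` iff some rule `A → x(B₁, …, B_k)` has `yⱼ` generated
from `Bⱼ` for every `j` (leftmost derivations split and glue along the children). By induction
on trees, this shows that the subset grammar generates `t` from exactly one nonterminal: the
set of all nonterminals of `G` generating `t`, provided it is nonempty. The size bound is
carried along unchanged.
-/

theorem List.Forall₂.exists_of_mem_right {α β : Type*} {P : α → β → Prop} {as : List α}
    {bs : List β} (h : List.Forall₂ P as bs) {b : β} (hb : b ∈ bs) : ∃ a ∈ as, P a b := by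
  induction h with
  | nil => simp at hb
  | cons hab _ ih =>
    rcases List.mem_cons.1 hb with rfl | hb
    · exact ⟨_, List.mem_cons_self, hab⟩
    · obtain ⟨a, ha, hab⟩ := ih hb
      exact ⟨a, List.mem_cons_of_mem _ ha, hab⟩

theorem List.forall₂_iff_eq_map {α β : Type*} {P : α → β → Prop} {f : β → α} {q : α → Prop} :
    ∀ {as : List α} {bs : List β}, (∀ b ∈ bs, ∀ a, P a b ↔ a = f b ∧ q a) →
      (List.Forall₂ P as bs ↔ as = bs.map f ∧ ∀ b ∈ bs, q (f b))
  | [], [], _ => by simp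
  | a :: as, [], _ => by simp
  | [], b :: bs, _ => by simp
  | a :: as, b :: bs, h => by
    simp only [List.forall₂_cons, List.map_cons, List.cons.injEq, List.forall_mem_cons,
      h b List.mem_cons_self,
      List.forall₂_iff_eq_map fun b' hb' => h b' (List.mem_cons_of_mem _ hb')]
    constructor
    · rintro ⟨⟨rfl, ha⟩, hbs, hq⟩
      exact ⟨⟨rfl, hbs⟩, ha, hq⟩
    · rintro ⟨⟨rfl, hbs⟩, ha, hq⟩
      exact ⟨⟨rfl, ha⟩, hbs, hq⟩

section Generation

variable {N α : Type} {R : Set (Rule N α)}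

theorem GenList.append {rs₁ rs₂ : List (Rule N α)} {s₁ s₂ : List N} {ts₁ ts₂ : List (RTree α)}
    (h₁ : GenList R rs₁ s₁ ts₁) (h₂ : GenList R rs₂ s₂ ts₂) :
    GenList R (rs₁ ++ rs₂) (s₁ ++ s₂) (ts₁ ++ ts₂) := by
  induction h₁ with
  | nil => exact h₂
  | step hr hlen _ ih =>
    simp only [List.cons_append]
    exact GenList.step hr hlen (by simpa only [List.append_assoc] using ih)

theorem exists_genList_of_forall₂ {stack : List N} {ts : List (RTree α)}
    (h : List.Forall₂ (fun A t => t ∈ Lang R A) stack ts) : ∃ rs, GenList R rs stack ts := by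
  induction h with
  | nil => exact ⟨[], .nil⟩
  | cons ht _ ih =>
    obtain ⟨rs₁, h₁⟩ := ht
    obtain ⟨rs₂, h₂⟩ := ih
    exact ⟨rs₁ ++ rs₂, h₁.append h₂⟩

theorem node_mem_lang {r : Rule N α} {rs : List (Rule N α)} {ys : List (RTree α)} (hr : r ∈ R)
    (hlen : ys.length = r.rhs.length) (h : GenList R rs r.rhs ys) :
    RTree.node r.sym ys ∈ Lang R r.lhs :=
  ⟨r :: rs, .step hr hlen (by simpa only [List.append_nil] using h)⟩

theorem GenList.forall₂_mem_lang {rs : List (Rule N α)} {stack : List N} {ts : List (RTree α)}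
    (h : GenList R rs stack ts) : List.Forall₂ (fun A t => t ∈ Lang R A) stack ts := by
  induction h with
  | nil => exact .nil
  | step hr hlen _ ih =>
    have hys := List.forall₂_take_append _ _ _ ih
    have hts := List.forall₂_drop_append _ _ _ ih
    rw [List.take_left' hlen.symm] at hys
    rw [List.drop_left' hlen.symm] at hts
    obtain ⟨rs', hrs'⟩ := exists_genList_of_forall₂ hys
    exact .cons (node_mem_lang hr hlen hrs') hts

theorem mem_lang_node_iff {A : N} {x : α} {ys : List (RTree α)} :
    RTree.node x ys ∈ Lang R A ↔
      ∃ Bs, Rule.mk A x Bs ∈ R ∧ List.Forall₂ (fun B y => y ∈ Lang R B) Bs ys := by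
  constructor
  · rintro ⟨_, h⟩
    cases h with
    | step hr _ h => exact ⟨_, hr, by simpa only [List.append_nil] using h.forall₂_mem_lang⟩
  · rintro ⟨Bs, hr, hBs⟩
    obtain ⟨rs, h⟩ := exists_genList_of_forall₂ hBs
    exact node_mem_lang hr hBs.length_eq.symm h

theorem setOf_node_mem_lang (x : α) (ys : List (RTree α)) :
    {A | RTree.node x ys ∈ Lang R A} = {A | ∃ Bs, Rule.mk A x Bs ∈ R ∧
      List.Forall₂ (· ∈ ·) Bs (ys.map fun y => {B | y ∈ Lang R B})} := by
  ext A
  simp [mem_lang_node_iff, List.forall₂_map_right_iff]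

end Generation

def IsSubsetConstruction {N α : Type} (R : Set (Rule N α)) (R' : Set (Rule (Set N) α)) : Prop :=
  ∀ r' : Rule (Set N) α, r' ∈ R' ↔
    (r'.lhs = {A | ∃ Bs : List N, Rule.mk A r'.sym Bs ∈ R ∧ List.Forall₂ (· ∈ ·) Bs r'.rhs} ∧
      r'.lhs.Nonempty)

theorem IsSubsetConstruction.mem_lang_iff {N α : Type} {R : Set (Rule N α)}
    {R' : Set (Rule (Set N) α)} (hR' : IsSubsetConstruction R R') (t : RTree α) (A' : Set N) :
    t ∈ Lang R' A' ↔ A' = {A | t ∈ Lang R A} ∧ A'.Nonempty := by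
  obtain ⟨x, ys⟩ := t
  have ih : ∀ y ∈ ys, ∀ B', y ∈ Lang R' B' ↔ B' = {B | y ∈ Lang R B} ∧ B'.Nonempty :=
    fun y _ => hR'.mem_lang_iff y
  rw [mem_lang_node_iff, setOf_node_mem_lang]
  simp only [hR' _, List.forall₂_iff_eq_map (q := Set.Nonempty) ih]
  constructor
  · rintro ⟨_, hA', rfl, -⟩
    exact hA'
  · rintro ⟨hA', A, hA⟩
    refine ⟨_, ⟨hA', A, hA⟩, rfl, fun y hy => ?_⟩
    rw [hA'] at hA
    obtain ⟨Bs, -, hBs⟩ := hA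
    obtain ⟨B, -, hB⟩ := hBs.exists_of_mem_right (List.mem_map_of_mem hy)
    exact ⟨B, hB⟩
termination_by t
decreasing_by
  have := List.sizeOf_lt_of_mem ‹y ∈ ys›
  simp only [RTree.node.sizeOf_spec]
  omega

theorem stmt2 {N alpha : Type} (R : Set (Rule N alpha)) (R' : Set (Rule (Set N) alpha))
    (hR' : ∀ r' : Rule (Set N) alpha, r' ∈ R' ↔
      (r'.lhs = {A | ∃ Bs : List N, Rule.mk A r'.sym Bs ∈ R ∧
          List.Forall₂ (fun (B : N) (B' : Set N) => B ∈ B') Bs r'.rhs} ∧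
        r'.lhs.Nonempty)) :
    ∀ (A : N) (n : Nat) (t : RTree alpha),
      t ∈ LangN R A n ↔ ∃ A' : Set N, A ∈ A' ∧ t ∈ LangN R' A' n := by
  intro A n t
  simp only [LangN, Set.mem_ofPred_eq, IsSubsetConstruction.mem_lang_iff hR' t]
  constructor
  · rintro ⟨ht, hn⟩
    exact ⟨_, ht, ⟨rfl, A, ht⟩, hn⟩
  · rintro ⟨A', hA, ⟨rfl, -⟩, hn⟩
    exact ⟨hA, hn⟩
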